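/- Let T > 0, let d ≥ 1 be an integer, and let H1 = (H_{1,1},...,H_{1,d}), H2 = (H_{2,1},...,H_{2,d}) ∈ (0,1)^d with H̄1 = max_j H_{1,j}, H̄2 = max_j H_{2,j}. If d < 1/H̄1 + 1/H̄2, then the fourfold integral ∫₀^T dt ∫₀^T dt' ∫₀^T ds ∫₀^T ds' ∏_{j=1}^d [ (t^{2H_{1,j}} + s^{2H_{2,j}})·(t'^{2H_{1,j}} + s'^{2H_{2,j}}) − (1/4)·( t^{2H_{1,j}} + t'^{2H_{1,j}} − |t − t'|^{2H_{1,j}} + s^{2H_{2,j}} + s'^{2H_{2,j}} − |s − s'|^{2H_{2,j}} )² ]^{−1/2} is finite. (This quantity equals (2π)^d times the squared L² norm of the intersection local time of two independent d-dimensional fractional Brownian motions with Hurst multiparameters H1 and H2 on [0,T].) -/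

import Mathlib

/-!
Each factor of the integrand is the determinant of the covariance matrix of
`(B¹_t + B²_s, B¹_{t'} + B²_{s'})` for independent fractional Brownian motions `B¹`, `B²`.
Superadditivity of the determinant on positive semidefinite matrices together with two-point local
nondeterminism bounds it below by
`c * ((min t t' * |t - t'|) ^ (2 H₁) + (min s s' * |s - s'|) ^ (2 H₂))`, and weighted AM-GM
with weights `α + β = 1` splits its inverse square root into a function of `(t, t')` times one
of `(s, s')`. The integral is thus at most a constant times the product of
`∫∫ (min t t' * |t - t'|) ^ (-p)` for `p = α ∑ H₁` and for `p = β ∑ H₂`, which is finite once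
`p < 1` because `min t t' ^ (-p) ≤ t ^ (-p) + t' ^ (-p)` and `|u| ^ (-p)` is locally integrable.
Since `∑ H_i ≤ d H̄_i`, the condition `d < 1 / H̄₁ + 1 / H̄₂` guarantees such weights.
-/

open MeasureTheory Set Real

theorem add_rpow_le_rpow_add_mul_rpow {a b H : ℝ} (hb : 0 ≤ b) (hba : b ≤ a)
    (hH0 : 0 ≤ H) (hH1 : H ≤ 1) : (a + b) ^ H ≤ a ^ H + H * b ^ H := by
  obtain rfl | ha := (hb.trans hba).eq_or_lt
  · obtain rfl : b = 0 := le_antisymm hba hb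
    simp only [add_zero, le_add_iff_nonneg_right]
    positivity
  set x := b / a
  have hx0 : 0 ≤ x := div_nonneg hb ha.le
  have hx1 : x ≤ 1 := (div_le_one ha).2 hba
  calc (a + b) ^ H = a ^ H * (1 + x) ^ H := by
        rw [← mul_rpow ha.le (by positivity), mul_add, mul_one, mul_div_cancel₀ _ ha.ne']
    _ ≤ a ^ H * (1 + H * x ^ H) := by
        gcongr
        calc (1 + x) ^ H ≤ 1 + H * x := rpow_one_add_le_one_add_mul_self (by linarith) hH0 hH1
          _ ≤ 1 + H * x ^ H := by gcongr; exact self_le_rpow_of_le_one hx0 hx1 hH1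
    _ = a ^ H + H * b ^ H := by
        rw [div_rpow hb ha.le]
        field_simp

theorem add_rpow_add_mul_min_le {a b H : ℝ} (ha : 0 ≤ a) (hb : 0 ≤ b) (hH0 : 0 ≤ H) (hH1 : H ≤ 1) :
    (a + b) ^ H + (1 - H) * min (a ^ H) (b ^ H) ≤ a ^ H + b ^ H := by
  rcases le_total b a with hba | hab
  · have := add_rpow_le_rpow_add_mul_rpow hb hba hH0 hH1
    have : min (a ^ H) (b ^ H) = b ^ H := min_eq_right (rpow_le_rpow hb hba hH0)
    nlinarith
  · have := add_rpow_le_rpow_add_mul_rpow ha hab hH0 hH1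
    have : min (a ^ H) (b ^ H) = a ^ H := min_eq_left (rpow_le_rpow ha hab hH0)
    rw [add_comm a b]; nlinarith

theorem rpow_two_mul_eq_sq {a : ℝ} (ha : 0 ≤ a) (H : ℝ) : a ^ (2 * H) = (a ^ H) ^ 2 := by
  rw [mul_comm, rpow_mul ha, rpow_two]

/-- The covariance `E[B_t B_s]` of a fractional Brownian motion with Hurst parameter `H`. -/
noncomputable def fbmCov (H t s : ℝ) : ℝ := 1 / 2 * (t ^ (2 * H) + s ^ (2 * H) - |t - s| ^ (2 * H))

theorem fbmCov_sq_le_of_le {H s t : ℝ} (hH0 : 0 < H) (hH1 : H < 1) (hs : 0 ≤ s) (hst : s ≤ t) :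
    (1 - H) / 4 * (s * (t - s)) ^ (2 * H) ≤ s ^ (2 * H) * t ^ (2 * H) - fbmCov H s t ^ 2 := by
  have hu : 0 ≤ t - s := by linarith
  have ht : 0 ≤ t := hs.trans hst
  have hY := rpow_nonneg hs H
  have hU := rpow_nonneg hu H
  have hYT : s ^ H ≤ t ^ H := rpow_le_rpow hs hst hH0.le
  have hUT : (t - s) ^ H ≤ t ^ H := rpow_le_rpow hu (by linarith) hH0.le
  have hsub := add_rpow_add_mul_min_le hs hu hH0.le hH1.le
  rw [add_sub_cancel] at hsub
  rw [fbmCov, abs_sub_comm, abs_of_nonneg hu, mul_rpow hs hu, rpow_two_mul_eq_sq hs,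
    rpow_two_mul_eq_sq hu, rpow_two_mul_eq_sq ht]
  set Y := s ^ H
  set U := (t - s) ^ H
  set R := t ^ H
  -- Heron's formula: the determinant is a product of four triangle-inequality defects.
  have heron : Y ^ 2 * R ^ 2 - (1 / 2 * (Y ^ 2 + R ^ 2 - U ^ 2)) ^ 2 =
      1 / 4 * ((Y + U - R) * (U + R - Y) * (R + Y - U) * (R + Y + U)) := by ring
  have h1 : (1 - H) * min Y U ≤ Y + U - R := by linarith
  have h1' : 0 ≤ Y + U - R := (mul_nonneg (by linarith) (le_min hY hU)).trans h1
  have h2 : U ≤ U + R - Y := by linarith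
  have h3 : Y ≤ R + Y - U := by linarith
  have h4 : max Y U ≤ R + Y + U := max_le (by linarith) (by linarith)
  have key := mul_le_mul (mul_le_mul (mul_le_mul h1 h2 hU h1') h3 hY
    (mul_nonneg h1' (hU.trans h2))) h4 (hY.trans (le_max_left Y U))
    (mul_nonneg (mul_nonneg h1' (hU.trans h2)) (hY.trans h3))
  have hprod : (1 - H) * min Y U * U * Y * max Y U = (1 - H) * (Y ^ 2 * U ^ 2) := by
    linear_combination (1 - H) * U * Y * min_mul_max Y U
  rw [heron]
  linarith

theorem fbmCov_comm (H t s : ℝ) : fbmCov H t s = fbmCov H s t := by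
  rw [fbmCov, fbmCov, add_comm (t ^ _), abs_sub_comm]

/-- Two-point local nondeterminism of fractional Brownian motion. -/
theorem fbmCov_sq_le {H t t' : ℝ} (hH0 : 0 < H) (hH1 : H < 1) (ht : 0 ≤ t) (ht' : 0 ≤ t') :
    (1 - H) / 4 * (min t t' * |t - t'|) ^ (2 * H) ≤
      t ^ (2 * H) * t' ^ (2 * H) - fbmCov H t t' ^ 2 := by
  rcases le_total t t' with h | h
  · rw [min_eq_left h, abs_sub_comm, abs_of_nonneg (sub_nonneg.2 h)]
    exact fbmCov_sq_le_of_le hH0 hH1 ht h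
  · rw [min_eq_right h, abs_of_nonneg (sub_nonneg.2 h), mul_comm (t ^ _), fbmCov_comm]
    exact fbmCov_sq_le_of_le hH0 hH1 ht' h

/-- Superadditivity of the determinant on positive semidefinite `2 × 2` matrices. -/
theorem mul_sub_sq_add_mul_sub_sq_le {a₁ a₂ b₁ b₂ c₁ c₂ : ℝ} (ha₁ : 0 ≤ a₁) (ha₂ : 0 ≤ a₂)
    (hb₁ : 0 ≤ b₁) (hb₂ : 0 ≤ b₂) (h₁ : c₁ ^ 2 ≤ a₁ * b₁) (h₂ : c₂ ^ 2 ≤ a₂ * b₂) :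
    a₁ * b₁ - c₁ ^ 2 + (a₂ * b₂ - c₂ ^ 2) ≤ (a₁ + a₂) * (b₁ + b₂) - (c₁ + c₂) ^ 2 := by
  have h : (c₁ * c₂) ^ 2 ≤ (a₁ * b₂) * (a₂ * b₁) := by
    nlinarith [mul_le_mul h₁ h₂ (sq_nonneg c₂) (mul_nonneg ha₁ hb₁)]
  nlinarith [sq_nonneg (a₁ * b₂ - a₂ * b₁), mul_nonneg ha₁ hb₂, mul_nonneg ha₂ hb₁]

/-- The determinant of the covariance matrix of `(B_t + B'_s, B_{t'} + B'_{s'})` for independent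
fractional Brownian motions `B`, `B'` with Hurst parameters `H`, `K`. -/
noncomputable def fbmFactor (H K t t' s s' : ℝ) : ℝ :=
  (t ^ (2 * H) + s ^ (2 * K)) * (t' ^ (2 * H) + s' ^ (2 * K)) -
    1 / 4 * (t ^ (2 * H) + t' ^ (2 * H) - |t - t'| ^ (2 * H) +
      s ^ (2 * K) + s' ^ (2 * K) - |s - s'| ^ (2 * K)) ^ 2

theorem fbmFactor_eq (H K t t' s s' : ℝ) : fbmFactor H K t t' s s' =
    (t ^ (2 * H) + s ^ (2 * K)) * (t' ^ (2 * H) + s' ^ (2 * K)) -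
      (fbmCov H t t' + fbmCov K s s') ^ 2 := by
  rw [fbmFactor, fbmCov, fbmCov]; ring

theorem mul_add_le_fbmFactor {H K t t' s s' : ℝ} (hH : H ∈ Ioo 0 1) (hK : K ∈ Ioo 0 1)
    (ht : 0 ≤ t) (ht' : 0 ≤ t') (hs : 0 ≤ s) (hs' : 0 ≤ s') :
    min (1 - H) (1 - K) / 4 *
        ((min t t' * |t - t'|) ^ (2 * H) + (min s s' * |s - s'|) ^ (2 * K)) ≤
      fbmFactor H K t t' s s' := by
  have dt := fbmCov_sq_le hH.1 hH.2 ht ht'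
  have ds := fbmCov_sq_le hK.1 hK.2 hs hs'
  have mt := rpow_nonneg (mul_nonneg (le_min ht ht') (abs_nonneg (t - t'))) (2 * H)
  have ms := rpow_nonneg (mul_nonneg (le_min hs hs') (abs_nonneg (s - s'))) (2 * K)
  have ct := mul_le_mul_of_nonneg_right (min_le_left (1 - H) (1 - K)) mt
  have cs := mul_le_mul_of_nonneg_right (min_le_right (1 - H) (1 - K)) ms
  have hsum := mul_sub_sq_add_mul_sub_sq_le (c₁ := fbmCov H t t') (c₂ := fbmCov K s s')
    (rpow_nonneg ht (2 * H)) (rpow_nonneg hs (2 * K)) (rpow_nonneg ht' (2 * H))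
    (rpow_nonneg hs' (2 * K)) (by nlinarith [hH.2]) (by nlinarith [hK.2])
  rw [fbmFactor_eq]
  linarith

/-- By weighted AM-GM, `A ^ α * B ^ β ≤ A + B`. -/
theorem rpow_neg_half_le_of_mul_add_le {c A B F α β : ℝ} (hc : 0 < c) (hA : 0 < A) (hB : 0 < B)
    (hα : 0 ≤ α) (hβ : 0 ≤ β) (hαβ : α + β = 1) (h : c * (A + B) ≤ F) :
    F ^ (-(1:ℝ) / 2) ≤ c ^ (-(1:ℝ) / 2) * (A ^ α) ^ (-(1:ℝ) / 2) * (B ^ β) ^ (-(1:ℝ) / 2) := by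
  have amgm : A ^ α * B ^ β ≤ A + B := by
    have := geom_mean_le_arith_mean2_weighted hα hβ hA.le hB.le hαβ
    nlinarith
  have hpos : 0 < c * (A ^ α * B ^ β) := by positivity
  calc F ^ (-(1:ℝ) / 2) ≤ (c * (A ^ α * B ^ β)) ^ (-(1:ℝ) / 2) :=
        rpow_le_rpow_of_nonpos hpos ((mul_le_mul_of_nonneg_left amgm hc.le).trans h) (by norm_num)
    _ = _ := by rw [mul_rpow hc.le (by positivity), mul_rpow (by positivity) (by positivity),
        mul_assoc]

theorem min_mul_abs_sub_pos {t t' : ℝ} (ht : 0 < t) (ht' : 0 < t') (htt' : t ≠ t') :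
    0 < min t t' * |t - t'| :=
  mul_pos (lt_min ht ht') (abs_pos.2 (sub_ne_zero.2 htt'))

theorem rpow_neg_half_fbmFactor_le {H K α β t t' s s' : ℝ} (hH : H ∈ Ioo 0 1) (hK : K ∈ Ioo 0 1)
    (hα : 0 ≤ α) (hβ : 0 ≤ β) (hαβ : α + β = 1) (ht : 0 < t) (ht' : 0 < t') (htt' : t ≠ t')
    (hs : 0 < s) (hs' : 0 < s') (hss' : s ≠ s') :
    0 < fbmFactor H K t t' s s' ∧ fbmFactor H K t t' s s' ^ (-(1:ℝ) / 2) ≤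
      (min (1 - H) (1 - K) / 4) ^ (-(1:ℝ) / 2) *
        (min t t' * |t - t'|) ^ (-(α * H)) * (min s s' * |s - s'|) ^ (-(β * K)) := by
  have hmt := min_mul_abs_sub_pos ht ht' htt'
  have hms := min_mul_abs_sub_pos hs hs' hss'
  have hc : 0 < min (1 - H) (1 - K) / 4 := by
    have := lt_min (sub_pos.2 hH.2) (sub_pos.2 hK.2)
    positivity
  have hA := rpow_pos_of_pos hmt (2 * H)
  have hB := rpow_pos_of_pos hms (2 * K)
  have hF := mul_add_le_fbmFactor hH hK ht.le ht'.le hs.le hs'.le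
  refine ⟨(by positivity : (0:ℝ) < _).trans_le hF,
    (rpow_neg_half_le_of_mul_add_le hc hA hB hα hβ hαβ hF).trans_eq ?_⟩
  rw [← rpow_mul hmt.le, ← rpow_mul hmt.le, ← rpow_mul hms.le, ← rpow_mul hms.le]
  ring_nf

theorem prod_rpow_neg_half_fbmFactor_le {d : ℕ} {H₁ H₂ : Fin d → ℝ} (h₁ : ∀ j, H₁ j ∈ Ioo 0 1)
    (h₂ : ∀ j, H₂ j ∈ Ioo 0 1) {α β t t' s s' : ℝ} (hα : 0 ≤ α) (hβ : 0 ≤ β) (hαβ : α + β = 1)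
    (ht : 0 < t) (ht' : 0 < t') (htt' : t ≠ t') (hs : 0 < s) (hs' : 0 < s') (hss' : s ≠ s') :
    ∏ j, fbmFactor (H₁ j) (H₂ j) t t' s s' ^ (-(1:ℝ) / 2) ≤
      (∏ j, (min (1 - H₁ j) (1 - H₂ j) / 4) ^ (-(1:ℝ) / 2)) *
        (min t t' * |t - t'|) ^ (-(α * ∑ j, H₁ j)) *
          (min s s' * |s - s'|) ^ (-(β * ∑ j, H₂ j)) := by
  have hmt := min_mul_abs_sub_pos ht ht' htt'
  have hms := min_mul_abs_sub_pos hs hs' hss'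
  have hj := fun j => rpow_neg_half_fbmFactor_le (h₁ j) (h₂ j) hα hβ hαβ ht ht' htt' hs hs' hss'
  refine (Finset.prod_le_prod (fun j _ => rpow_nonneg (hj j).1.le _)
    (fun j _ => (hj j).2)).trans_eq ?_
  rw [Finset.prod_mul_distrib, Finset.prod_mul_distrib, ← rpow_sum_of_pos hmt,
    ← rpow_sum_of_pos hms, Finset.mul_sum, Finset.mul_sum, Finset.sum_neg_distrib,
    Finset.sum_neg_distrib]

theorem lintegral_ball_rpow_neg_abs_lt_top {p : ℝ} (hp : p < 1) (r : ℝ) :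
    ∫⁻ u in Metric.ball 0 r, ENNReal.ofReal (|u| ^ (-p)) < ⊤ := by
  refine Integrable.lintegral_lt_top (integrableOn_ball_of_norm_le_rpow (C := 1) (α := p)
    (by simp) (by simpa using hp) (ae_of_all _ fun u => ?_)
    (continuous_abs.measurable.pow_const _).aestronglyMeasurable)
  simp [abs_rpow_of_nonneg (abs_nonneg u)]

theorem lintegral_Icc_rpow_neg_abs_sub_le {T t : ℝ} (ht : t ∈ Icc 0 T) (p : ℝ) :
    ∫⁻ t' in Icc 0 T, ENNReal.ofReal (|t - t'| ^ (-p)) ≤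
      ∫⁻ u in Metric.ball 0 (T + 1), ENNReal.ofReal (|u| ^ (-p)) := by
  set g := (Metric.ball (0:ℝ) (T + 1)).indicator fun u => ENNReal.ofReal (|u| ^ (-p))
  calc ∫⁻ t' in Icc 0 T, ENNReal.ofReal (|t - t'| ^ (-p))
      ≤ ∫⁻ t' in Icc 0 T, g (t - t') := by
        refine setLIntegral_mono' measurableSet_Icc fun t' ht' => ?_
        refine (indicator_of_mem (s := Metric.ball (0:ℝ) (T + 1)) ?_
          (fun u => ENNReal.ofReal (|u| ^ (-p)))).symm.le
        rw [Metric.mem_ball, dist_zero_right, norm_eq_abs, abs_lt]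
        constructor <;> linarith [ht.1, ht.2, ht'.1, ht'.2]
    _ ≤ ∫⁻ t', g (t - t') := setLIntegral_le_lintegral _ _
    _ = ∫⁻ u in Metric.ball 0 (T + 1), ENNReal.ofReal (|u| ^ (-p)) := by
        rw [lintegral_sub_left_eq_self g t, lintegral_indicator Metric.isOpen_ball.measurableSet]

theorem lintegral_Icc_Icc_rpow_neg_min_mul_abs_sub_lt_top {p : ℝ} (hp : p < 1) (T : ℝ) :
    ∫⁻ t in Icc 0 T, ∫⁻ t' in Icc 0 T, ENNReal.ofReal ((min t t' * |t - t'|) ^ (-p)) < ⊤ := by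
  set K := ∫⁻ u in Metric.ball 0 (T + 1), ENNReal.ofReal (|u| ^ (-p))
  set a : ℝ → ℝ → ENNReal := fun t t' =>
    ENNReal.ofReal (|t| ^ (-p)) * ENNReal.ofReal (|t - t'| ^ (-p))
  have hK : K < ⊤ := lintegral_ball_rpow_neg_abs_lt_top hp _
  have ha : Measurable (Function.uncurry a) := by fun_prop
  have split : ∀ t ∈ Icc 0 T, ∀ t' ∈ Icc 0 T,
      ENNReal.ofReal ((min t t' * |t - t'|) ^ (-p)) ≤ a t t' + a t' t := by
    intro t ht t' ht'
    rw [mul_rpow (le_min ht.1 ht'.1) (abs_nonneg _),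
      ENNReal.ofReal_mul (rpow_nonneg (le_min ht.1 ht'.1) _)]
    simp only [a, abs_of_nonneg ht.1, abs_of_nonneg ht'.1, abs_sub_comm t' t]
    rcases le_total t t' with h | h
    · rw [min_eq_left h]; exact le_self_add
    · rw [min_eq_right h]; exact le_add_self
  have ball_sub : Icc 0 T ⊆ Metric.ball 0 (T + 1) := fun t ht => by
    rw [Metric.mem_ball, dist_zero_right, norm_eq_abs, abs_of_nonneg ht.1]; linarith [ht.2]
  have half : ∫⁻ t in Icc 0 T, ∫⁻ t' in Icc 0 T, a t t' ≤ K * K := calc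
      ∫⁻ t in Icc 0 T, ∫⁻ t' in Icc 0 T, a t t'
        = ∫⁻ t in Icc 0 T, ENNReal.ofReal (|t| ^ (-p)) *
            ∫⁻ t' in Icc 0 T, ENNReal.ofReal (|t - t'| ^ (-p)) :=
          lintegral_congr fun t => lintegral_const_mul' _ _ ENNReal.ofReal_ne_top
      _ ≤ ∫⁻ t in Icc 0 T, ENNReal.ofReal (|t| ^ (-p)) * K :=
          setLIntegral_mono' measurableSet_Icc fun t ht => by
            gcongr; exact lintegral_Icc_rpow_neg_abs_sub_le ht p
      _ ≤ K * K := by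
          rw [lintegral_mul_const' _ _ hK.ne]
          gcongr; exact lintegral_mono_set ball_sub
  calc ∫⁻ t in Icc 0 T, ∫⁻ t' in Icc 0 T, ENNReal.ofReal ((min t t' * |t - t'|) ^ (-p))
      ≤ ∫⁻ t in Icc 0 T, ∫⁻ t' in Icc 0 T, (a t t' + a t' t) :=
        setLIntegral_mono' measurableSet_Icc fun t ht =>
          setLIntegral_mono' measurableSet_Icc fun t' ht' => split t ht t' ht'
    _ = (∫⁻ t in Icc 0 T, ∫⁻ t' in Icc 0 T, a t t') +
          ∫⁻ t in Icc 0 T, ∫⁻ t' in Icc 0 T, a t' t := by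
        rw [← lintegral_add_left (f := fun t => ∫⁻ t' in Icc 0 T, a t t') ha.lintegral_prod_right']
        exact lintegral_congr fun t => lintegral_add_left (ha.comp measurable_prodMk_left) _
    _ = (∫⁻ t in Icc 0 T, ∫⁻ t' in Icc 0 T, a t t') +
          ∫⁻ t in Icc 0 T, ∫⁻ t' in Icc 0 T, a t t' := by
        rw [lintegral_lintegral_swap (f := fun t t' => a t' t) (by fun_prop)]
    _ ≤ K * K + K * K := add_le_add half half
    _ < ⊤ := by finiteness

theorem lintegral_lintegral_lintegral_lintegral_lt_top_of_le_mul {α : Type*} [MeasurableSpace α]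
    {μ : Measure α} {F : α → α → α → α → ENNReal} {f g : α → α → ENNReal} {P : α → α → Prop}
    (hP : ∀ᵐ x ∂μ, ∀ᵐ y ∂μ, P x y)
    (hF : ∀ x y u v, P x y → P u v → F x y u v ≤ f x y * g u v) (hf_ne_top : ∀ x y, f x y ≠ ⊤)
    (hf : ∫⁻ x, ∫⁻ y, f x y ∂μ ∂μ < ⊤) (hg : ∫⁻ u, ∫⁻ v, g u v ∂μ ∂μ < ⊤) :
    ∫⁻ x, ∫⁻ y, ∫⁻ u, ∫⁻ v, F x y u v ∂μ ∂μ ∂μ ∂μ < ⊤ := by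
  have inner : ∀ x y, P x y → ∫⁻ u, ∫⁻ v, F x y u v ∂μ ∂μ ≤ f x y * ∫⁻ u, ∫⁻ v, g u v ∂μ ∂μ := by
    intro x y hxy
    calc ∫⁻ u, ∫⁻ v, F x y u v ∂μ ∂μ ≤ ∫⁻ u, ∫⁻ v, f x y * g u v ∂μ ∂μ :=
          lintegral_mono_ae (hP.mono fun u hu => lintegral_mono_ae (hu.mono fun v huv =>
            hF x y u v hxy huv))
      _ = f x y * ∫⁻ u, ∫⁻ v, g u v ∂μ ∂μ := by
          simp_rw [lintegral_const_mul' _ _ (hf_ne_top x y)]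
  calc ∫⁻ x, ∫⁻ y, ∫⁻ u, ∫⁻ v, F x y u v ∂μ ∂μ ∂μ ∂μ
      ≤ ∫⁻ x, ∫⁻ y, f x y * ∫⁻ u, ∫⁻ v, g u v ∂μ ∂μ ∂μ ∂μ :=
        lintegral_mono_ae (hP.mono fun x hx => lintegral_mono_ae (hx.mono fun y hxy =>
          inner x y hxy))
    _ = (∫⁻ x, ∫⁻ y, f x y ∂μ ∂μ) * ∫⁻ u, ∫⁻ v, g u v ∂μ ∂μ := by
        simp_rw [lintegral_mul_const' _ _ hg.ne]
    _ < ⊤ := ENNReal.mul_lt_top hf hg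

theorem ae_restrict_Icc_pos_pos_ne (T : ℝ) :
    ∀ᵐ t ∂volume.restrict (Icc 0 T), ∀ᵐ t' ∂volume.restrict (Icc 0 T), 0 < t ∧ 0 < t' ∧ t ≠ t' := by
  have hpos : ∀ᵐ t ∂volume.restrict (Icc (0:ℝ) T), 0 < t := by
    filter_upwards [ae_restrict_mem measurableSet_Icc, ae_restrict_of_ae (Measure.ae_ne volume 0)]
      with t ht ht0 using ht.1.lt_of_ne' ht0
  filter_upwards [hpos] with t ht
  filter_upwards [hpos, ae_restrict_of_ae (Measure.ae_ne volume t)] with t' ht' htt'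
  exact ⟨ht, ht', htt'.symm⟩

theorem exists_pos_add_eq_one_mul_lt_one {S₁ S₂ : ℝ} (hS₁ : 0 < S₁) (hS₂ : 0 < S₂)
    (h : 1 < 1 / S₁ + 1 / S₂) :
    ∃ α β : ℝ, 0 < α ∧ 0 < β ∧ α + β = 1 ∧ α * S₁ < 1 ∧ β * S₂ < 1 := by
  set σ := 1 / S₁ + 1 / S₂
  have hσ : 0 < σ := by linarith
  refine ⟨1 / (S₁ * σ), 1 / (S₂ * σ), by positivity, by positivity, ?_, ?_, ?_⟩
  · simp only [σ]; field_simp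
  · rwa [one_div_mul_eq_div, div_mul_cancel_left₀ hS₁.ne', inv_lt_one₀ hσ]
  · rwa [one_div_mul_eq_div, div_mul_cancel_left₀ hS₂.ne', inv_lt_one₀ hσ]

theorem one_lt_one_div_sum_add_one_div_sum {ι : Type*} [Fintype ι] {H₁ H₂ : ι → ℝ} {M₁ M₂ : ℝ}
    (hS₁ : 0 < ∑ j, H₁ j) (hS₂ : 0 < ∑ j, H₂ j) (hM₁ : M₁ ∈ upperBounds (range H₁))
    (hM₂ : M₂ ∈ upperBounds (range H₂)) (h : (Fintype.card ι : ℝ) < 1 / M₁ + 1 / M₂) :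
    1 < 1 / ∑ j, H₁ j + 1 / ∑ j, H₂ j := by
  have hcard : (0:ℝ) < Fintype.card ι := by
    obtain ⟨j, -, -⟩ := Finset.exists_ne_zero_of_sum_ne_zero hS₁.ne'
    exact_mod_cast Fintype.card_pos_iff.2 ⟨j⟩
  have key : ∀ {H : ι → ℝ} {M : ℝ}, 0 < ∑ j, H j → M ∈ upperBounds (range H) →
      1 / M / Fintype.card ι ≤ 1 / ∑ j, H j := by
    intro H M hS hM
    have hle : ∑ j, H j ≤ Fintype.card ι * M := by
      simpa using Finset.sum_le_card_nsmul Finset.univ _ _ fun j _ => hM ⟨j, rfl⟩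
    rw [div_div, mul_comm]
    exact one_div_le_one_div_of_le hS hle
  calc 1 < (1 / M₁ + 1 / M₂) / Fintype.card ι := by rwa [one_lt_div hcard]
    _ ≤ _ := by rw [add_div]; exact add_le_add (key hS₁ hM₁) (key hS₂ hM₂)

theorem local_time_L2_norm_finite (T : ℝ) (d : ℕ) (hd : 1 ≤ d)
    (H1 H2 : Fin d → ℝ)
    (h1 : ∀ j, H1 j ∈ Ioo (0:ℝ) 1) (h2 : ∀ j, H2 j ∈ Ioo (0:ℝ) 1)
    (HB1 HB2 : ℝ)
    (hB1 : IsGreatest (Set.range H1) HB1) (hB2 : IsGreatest (Set.range H2) HB2)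
    (hcond : (d : ℝ) < 1 / HB1 + 1 / HB2) :
    (∫⁻ t in Icc (0:ℝ) T, ∫⁻ t' in Icc (0:ℝ) T, ∫⁻ s in Icc (0:ℝ) T, ∫⁻ s' in Icc (0:ℝ) T,
        ENNReal.ofReal (∏ j,
          ((t ^ (2 * H1 j) + s ^ (2 * H2 j)) * (t' ^ (2 * H1 j) + s' ^ (2 * H2 j)) -
              1/4 * (t ^ (2 * H1 j) + t' ^ (2 * H1 j) - |t - t'| ^ (2 * H1 j) +
                      s ^ (2 * H2 j) + s' ^ (2 * H2 j) - |s - s'| ^ (2 * H2 j)) ^ 2) ^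
            (-(1:ℝ)/2))) < ⊤ := by
  have : NeZero d := ⟨by omega⟩
  have hS1 : 0 < ∑ j, H1 j := Finset.sum_pos (fun j _ => (h1 j).1) Finset.univ_nonempty
  have hS2 : 0 < ∑ j, H2 j := Finset.sum_pos (fun j _ => (h2 j).1) Finset.univ_nonempty
  obtain ⟨α, β, hα, hβ, hαβ, hp, hq⟩ := exists_pos_add_eq_one_mul_lt_one hS1 hS2
    (one_lt_one_div_sum_add_one_div_sum hS1 hS2 hB1.2 hB2.2 (by simpa using hcond))
  set C := ∏ j, (min (1 - H1 j) (1 - H2 j) / 4) ^ (-(1:ℝ) / 2)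
  have hC : 0 ≤ C := Finset.prod_nonneg fun j _ => rpow_nonneg
    (div_nonneg (le_min (sub_pos.2 (h1 j).2).le (sub_pos.2 (h2 j).2).le) zero_le_four) _
  refine lintegral_lintegral_lintegral_lintegral_lt_top_of_le_mul (ae_restrict_Icc_pos_pos_ne T)
    (f := fun t t' =>
      ENNReal.ofReal C * ENNReal.ofReal ((min t t' * |t - t'|) ^ (-(α * ∑ j, H1 j))))
    (g := fun s s' => ENNReal.ofReal ((min s s' * |s - s'|) ^ (-(β * ∑ j, H2 j))))
    ?_ (fun _ _ => by finiteness) ?_ (lintegral_Icc_Icc_rpow_neg_min_mul_abs_sub_lt_top hq T)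
  · rintro t t' s s' ⟨ht, ht', htt'⟩ ⟨hs, hs', hss'⟩
    rw [← ENNReal.ofReal_mul hC, ← ENNReal.ofReal_mul (mul_nonneg hC (rpow_nonneg
      (mul_nonneg (le_min ht.le ht'.le) (abs_nonneg _)) _))]
    exact ENNReal.ofReal_le_ofReal
      (prod_rpow_neg_half_fbmFactor_le h1 h2 hα.le hβ.le hαβ ht ht' htt' hs hs' hss')
  · simp_rw [lintegral_const_mul' _ _ ENNReal.ofReal_ne_top]
    exact ENNReal.mul_lt_top ENNReal.ofReal_lt_top
      (lintegral_Icc_Icc_rpow_neg_min_mul_abs_sub_lt_top hp T)
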